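/- At the critical fugacity z_n = 1, the variance of the walk length of the self-avoiding walk on K_n satisfies var_{n,1}(L_n) ~ (1 − 2/π)·n as n → ∞. -/

import Mathlib

open Filter Finset Real Asymptotics

/-- Number of `k`-step SAWs weight: `(z/n)^k` times the number of walks. -/
noncomputable def sawWeight (n : ℕ) (z : ℝ) (k : ℕ) : ℝ :=
  (z / n) ^ k * ((n - 1).descFactorial k)

/-- Partition function of the variable-length SAW model on `K_n`. -/
noncomputable def sawZ (n : ℕ) (z : ℝ) : ℝ := ∑ k ∈ Finset.range n, sawWeight n z k

/-- Probability that the walk length equals `k`. -/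
noncomputable def sawProb (n : ℕ) (z : ℝ) (k : ℕ) : ℝ := sawWeight n z k / sawZ n z

/-- Mean walk length. -/
noncomputable def sawMean (n : ℕ) (z : ℝ) : ℝ := ∑ k ∈ Finset.range n, (k : ℝ) * sawProb n z k

/-- Variance of the walk length. -/
noncomputable def sawVar (n : ℕ) (z : ℝ) : ℝ :=
  (∑ k ∈ Finset.range n, (k : ℝ) ^ 2 * sawProb n z k) - (sawMean n z) ^ 2

/-- Tail distribution `P(L_n > x)` for real `x`. -/
noncomputable def sawTail (n : ℕ) (z : ℝ) (x : ℝ) : ℝ :=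
  ∑ k ∈ Finset.range n, if x < (k : ℝ) then sawProb n z k else 0

/-- Regularised incomplete gamma function at integer first argument,
    `Q(n, ν) = e^{-ν} ∑_{j<n} ν^j/j!`. -/
noncomputable def Qreg (n : ℕ) (ν : ℝ) : ℝ :=
  Real.exp (-ν) * ∑ j ∈ Finset.range n, ν ^ j / (Nat.factorial j)

/-- `H_n(ν) = Γ(n) Q(n,ν) / (ν^n e^{-ν})`. -/
noncomputable def Hfun (n : ℕ) (ν : ℝ) : ℝ :=
  Real.Gamma n * Qreg n ν / (ν ^ n * Real.exp (-ν))

/-- Standard normal density. -/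
noncomputable def normpdf (x : ℝ) : ℝ := Real.exp (-x ^ 2 / 2) / Real.sqrt (2 * Real.pi)

/-- Standard normal tail distribution `Φ̄`. -/
noncomputable def normTail (x : ℝ) : ℝ := ∫ t in Set.Ioi x, normpdf t

/-- `η(λ) = sgn(λ-1) √(2(λ-1-log λ))`. -/
noncomputable def etaF (l : ℝ) : ℝ := Real.sign (l - 1) * Real.sqrt (2 * (l - 1 - Real.log l))

/-- `Γ*(n) = √(n/(2π)) e^n n^{-n} Γ(n)`. -/
noncomputable def gammaStar (n : ℕ) : ℝ :=
  Real.sqrt (n / (2 * Real.pi)) * Real.exp n * ((n : ℝ) ^ n)⁻¹ * Real.Gamma n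

/-- The operator `(ν d/dν)^l`. -/
noncomputable def thetaOp : ℕ → (ℝ → ℝ) → (ℝ → ℝ)
  | 0, f => f
  | (l + 1), f => fun ν => ν * deriv (thetaOp l f) ν

open Topology MeasureTheory

/-! At `z = 1` the weights are `w k = ∏_{i<k} (1 - (i+1)/n)`, and the recurrence
`n w (k+1) = (n - 1 - k) w k` yields the first two moments exactly: `∑ k w k = n - Z` and
`∑ k² w k = (n+1) Z - 2n`, so that `Var = n - n²/Z²`. Since `w k ≈ exp (-k²/(2n))` for
`k = O(√n)`, the partition function `Z` is a Riemann sum for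
`∫₀^∞ exp (-x²/(2n)) dx = √(πn/2)`; hence `n/Z² → 2/π`. -/

lemma sawWeight_zero (n : ℕ) (z : ℝ) : sawWeight n z 0 = 1 := by
  simp [sawWeight]

lemma sawWeight_eq_zero_of_le {n k : ℕ} (z : ℝ) (hn : n ≠ 0) (hk : n ≤ k) :
    sawWeight n z k = 0 := by
  simp [sawWeight, Nat.descFactorial_eq_zero_iff_lt.2 (by omega : n - 1 < k)]

lemma sawWeight_succ {n : ℕ} (z : ℝ) (hn : n ≠ 0) (k : ℕ) :
    sawWeight n z (k + 1) = z * (1 - (k + 1) / n) * sawWeight n z k := by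
  rcases lt_or_ge k n with hk | hk
  · have hn' : (n : ℝ) ≠ 0 := Nat.cast_ne_zero.2 hn
    simp only [sawWeight, Nat.descFactorial_succ, Nat.cast_mul, pow_succ,
      Nat.cast_sub (by omega : k ≤ n - 1), Nat.cast_sub (by omega : 1 ≤ n), Nat.cast_one]
    field_simp
    ring
  · rw [sawWeight_eq_zero_of_le z hn (by omega), sawWeight_eq_zero_of_le z hn hk, mul_zero]

lemma sawWeight_eq_prod {n : ℕ} (z : ℝ) (hn : n ≠ 0) (k : ℕ) :
    sawWeight n z k = z ^ k * ∏ i ∈ range k, (1 - ((i : ℝ) + 1) / n) := by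
  induction k with
  | zero => simp [sawWeight_zero]
  | succ k ih => rw [sawWeight_succ z hn, ih, prod_range_succ, pow_succ]; ring

lemma sum_range_mul_sawWeight_succ {n : ℕ} (z : ℝ) (hn : n ≠ 0) (f : ℕ → ℝ) :
    ∑ k ∈ range n, f (k + 1) * sawWeight n z (k + 1)
      = ∑ k ∈ range n, f k * sawWeight n z k - f 0 := by
  have h := sum_range_succ' (fun k => f k * sawWeight n z k) n
  rw [sum_range_succ, sawWeight_eq_zero_of_le z hn le_rfl, sawWeight_zero] at h
  linarith

lemma sum_range_cast_mul_sawWeight_one {n : ℕ} (hn : n ≠ 0) :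
    ∑ k ∈ range n, (k : ℝ) * sawWeight n 1 k = n - sawZ n 1 := by
  have h := sum_range_mul_sawWeight_succ 1 hn fun _ => (n : ℝ)
  have hn' : (n : ℝ) ≠ 0 := Nat.cast_ne_zero.2 hn
  have e : ∀ k ∈ range n, (n : ℝ) * sawWeight n 1 (k + 1)
      = (n - 1) * sawWeight n 1 k - k * sawWeight n 1 k := fun k _ => by
    rw [sawWeight_succ 1 hn]; field_simp; ring
  rw [sum_congr rfl e, sum_sub_distrib, ← mul_sum, ← mul_sum] at h
  unfold sawZ
  linarith

lemma sum_range_cast_sq_mul_sawWeight_one {n : ℕ} (hn : n ≠ 0) :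
    ∑ k ∈ range n, (k : ℝ) ^ 2 * sawWeight n 1 k = (n + 1) * sawZ n 1 - 2 * n := by
  have h := sum_range_mul_sawWeight_succ 1 hn fun k => (n : ℝ) * k
  have hn' : (n : ℝ) ≠ 0 := Nat.cast_ne_zero.2 hn
  have e : ∀ k ∈ range n, (n : ℝ) * ↑(k + 1) * sawWeight n 1 (k + 1)
      = (n - 1) * sawWeight n 1 k + (n - 2) * (k * sawWeight n 1 k)
        - k ^ 2 * sawWeight n 1 k := fun k _ => by
    rw [sawWeight_succ 1 hn]; push_cast; field_simp; ring
  rw [sum_congr rfl e, sum_sub_distrib, sum_add_distrib, ← mul_sum, ← mul_sum] at h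
  simp only [mul_assoc, ← mul_sum, sum_range_cast_mul_sawWeight_one hn, Nat.cast_zero,
    mul_zero] at h
  unfold sawZ at *
  linear_combination -h

lemma sawWeight_nonneg (n : ℕ) {z : ℝ} (hz : 0 ≤ z) (k : ℕ) : 0 ≤ sawWeight n z k := by
  unfold sawWeight
  positivity

lemma one_le_sawZ {n : ℕ} {z : ℝ} (hn : n ≠ 0) (hz : 0 ≤ z) : 1 ≤ sawZ n z :=
  sawWeight_zero n z ▸
    single_le_sum (fun k _ => sawWeight_nonneg n hz k) (mem_range.2 (Nat.pos_of_ne_zero hn))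

lemma sawVar_one {n : ℕ} (hn : n ≠ 0) : sawVar n 1 = n - n ^ 2 / sawZ n 1 ^ 2 := by
  have hZ : sawZ n 1 ≠ 0 := (zero_lt_one.trans_le (one_le_sawZ hn zero_le_one)).ne'
  simp only [sawVar, sawMean, sawProb, mul_div_assoc', ← sum_div,
    sum_range_cast_mul_sawWeight_one hn, sum_range_cast_sq_mul_sawWeight_one hn]
  field_simp
  ring

lemma exp_neg_sub_two_mul_sq_le_one_sub {x : ℝ} (h : x ≤ 1 / 2) :
    exp (-x - 2 * x ^ 2) ≤ 1 - x := by
  have h1 := add_one_le_exp (x + 2 * x ^ 2)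
  rw [show -x - 2 * x ^ 2 = -(x + 2 * x ^ 2) by ring, exp_neg, inv_le_iff_one_le_mul₀' (exp_pos _)]
  nlinarith [mul_le_mul_of_nonneg_left h1 (by linarith : (0 : ℝ) ≤ 1 - x)]

lemma prod_one_sub_le_exp_neg_sum {ι : Type*} (s : Finset ι) {x : ι → ℝ} (h : ∀ i ∈ s, x i ≤ 1) :
    ∏ i ∈ s, (1 - x i) ≤ exp (-∑ i ∈ s, x i) := by
  rw [← sum_neg_distrib, exp_sum]
  exact prod_le_prod (fun i hi => sub_nonneg.2 (h i hi)) fun i _ => one_sub_le_exp_neg _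

lemma exp_neg_sum_sub_le_prod_one_sub {ι : Type*} (s : Finset ι) {x : ι → ℝ}
    (h : ∀ i ∈ s, x i ≤ 1 / 2) :
    exp (-∑ i ∈ s, x i - 2 * ∑ i ∈ s, x i ^ 2) ≤ ∏ i ∈ s, (1 - x i) := by
  rw [mul_sum, ← sum_neg_distrib, ← sum_sub_distrib, exp_sum]
  exact prod_le_prod (fun i _ => (exp_pos _).le) fun i hi =>
    exp_neg_sub_two_mul_sq_le_one_sub (h i hi)

lemma sum_range_cast_add_one (k : ℕ) : ∑ i ∈ range k, ((i : ℝ) + 1) = k * (k + 1) / 2 := by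
  induction k with
  | zero => simp
  | succ k ih => rw [sum_range_succ, ih]; push_cast; ring

lemma sawWeight_one_le {n : ℕ} (hn : n ≠ 0) (k : ℕ) :
    sawWeight n 1 k ≤ exp (-k ^ 2 / (2 * n)) := by
  rcases le_or_gt n k with hk | hk
  · rw [sawWeight_eq_zero_of_le 1 hn hk]; positivity
  have hn' : (0 : ℝ) < n := by positivity
  rw [sawWeight_eq_prod 1 hn, one_pow, one_mul]
  refine (prod_one_sub_le_exp_neg_sum _ fun i hi => ?_).trans (exp_le_exp.2 ?_)
  · rw [div_le_one hn']
    exact_mod_cast (mem_range.1 hi).trans hk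
  · rw [← sum_div, sum_range_cast_add_one, neg_div, neg_le_neg_iff, div_div]
    gcongr
    nlinarith

lemma exp_neg_le_sawWeight_one {n k : ℕ} (hk : 2 * k ≤ n) :
    exp (-((k : ℝ) * (k + 1)) / (2 * n) - 2 * (k : ℝ) ^ 3 / n ^ 2) ≤ sawWeight n 1 k := by
  rcases Nat.eq_zero_or_pos k with rfl | hk0
  · simp [sawWeight_zero]
  have hn : n ≠ 0 := by omega
  have hn' : (0 : ℝ) < n := by positivity
  have hik : ∀ i ∈ range k, (i : ℝ) + 1 ≤ k := fun i hi => by exact_mod_cast mem_range.1 hi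
  rw [sawWeight_eq_prod 1 hn, one_pow, one_mul]
  refine (exp_le_exp.2 ?_).trans (exp_neg_sum_sub_le_prod_one_sub _ fun i hi => ?_)
  · have hsq : ∑ i ∈ range k, (((i : ℝ) + 1) / n) ^ 2 ≤ (k : ℝ) ^ 3 / n ^ 2 := by
      calc ∑ i ∈ range k, (((i : ℝ) + 1) / n) ^ 2 ≤ ∑ _i ∈ range k, ((k : ℝ) / n) ^ 2 :=
            sum_le_sum fun i hi => by gcongr; exact hik i hi
        _ = k ^ 3 / n ^ 2 := by rw [sum_const, card_range, nsmul_eq_mul]; ring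
    rw [← sum_div, sum_range_cast_add_one]
    linarith [show -((k : ℝ) * (k + 1)) / (2 * n) = -(k * (k + 1) / 2 / n) by ring,
      show 2 * (k : ℝ) ^ 3 / n ^ 2 = 2 * (k ^ 3 / n ^ 2) by ring]
  · rw [div_le_div_iff₀ hn' (by norm_num)]
    have : (2 * k : ℝ) ≤ n := by exact_mod_cast hk
    linarith [hik i hi]

lemma antitoneOn_exp_neg_sq_div {c : ℝ} (hc : 0 ≤ c) :
    AntitoneOn (fun x : ℝ => exp (-x ^ 2 / c)) (Set.Ici 0) := fun x hx y _ hxy => by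
  simp only [neg_div]
  gcongr

lemma integral_exp_neg_sq_div_two_mul {a : ℝ} (ha : 0 < a) (b : ℝ) :
    ∫ x in (0 : ℝ)..b, exp (-x ^ 2 / (2 * a)) = √a * ∫ u in (0 : ℝ)..b / √a, exp (-u ^ 2 / 2) := by
  have h := intervalIntegral.integral_comp_div (fun u => exp (-u ^ 2 / 2)) (a := 0) (b := b)
    (sqrt_pos.2 ha).ne'
  rw [zero_div, smul_eq_mul] at h
  rw [← h]
  congr 1
  ext x
  rw [div_pow, sq_sqrt ha.le]
  ring_nf

lemma integrable_exp_neg_sq_div_two : Integrable fun u : ℝ => exp (-u ^ 2 / 2) := by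
  convert integrable_exp_neg_mul_sq (by norm_num : (0 : ℝ) < 1 / 2) using 3
  ring

lemma integral_Ioi_exp_neg_sq_div_two : ∫ u in Set.Ioi 0, exp (-u ^ 2 / 2) = √(π / 2) := by
  have h := integral_gaussian_Ioi (1 / 2)
  simp only [neg_mul, one_div, ← div_eq_inv_mul, ← neg_div] at h
  rw [h, show π / 2⁻¹ = π / 2 * 2 ^ 2 by ring, sqrt_mul (by positivity), sqrt_sq zero_le_two]
  ring

lemma intervalIntegral_exp_neg_sq_div_two_le {b : ℝ} (hb : 0 ≤ b) :
    ∫ u in (0 : ℝ)..b, exp (-u ^ 2 / 2) ≤ ∫ u in Set.Ioi 0, exp (-u ^ 2 / 2) := by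
  rw [intervalIntegral.integral_of_le hb]
  exact setIntegral_mono_set integrable_exp_neg_sq_div_two.integrableOn
    (ae_of_all _ fun _ => (exp_pos _).le) Set.Ioc_subset_Ioi_self.eventuallyLE

lemma sawZ_one_le {n : ℕ} (hn : n ≠ 0) :
    sawZ n 1 ≤ 1 + √n * ∫ u in Set.Ioi 0, exp (-u ^ 2 / 2) := by
  have hn' : (0 : ℝ) < n := by positivity
  obtain ⟨m, rfl⟩ := Nat.exists_eq_succ_of_ne_zero hn
  have hsum : ∑ k ∈ range m, sawWeight (m + 1) 1 (k + 1)
      ≤ ∫ x in (0 : ℝ)..0 + m, exp (-x ^ 2 / (2 * ↑(m + 1))) :=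
    (sum_le_sum fun k _ => by simpa using sawWeight_one_le hn (k + 1)).trans
      ((antitoneOn_exp_neg_sq_div (by positivity)).mono fun x hx => hx.1).sum_le_integral
  rw [zero_add, integral_exp_neg_sq_div_two_mul hn'] at hsum
  have hI := intervalIntegral_exp_neg_sq_div_two_le (b := m / √↑(m + 1)) (by positivity)
  rw [sawZ, sum_range_succ', sawWeight_zero]
  nlinarith [sqrt_nonneg (↑(m + 1) : ℝ)]

lemma exp_neg_mul_integral_le_sawZ_one {n K : ℕ} (hK : 2 * K ≤ n) :
    exp (-(K / (2 * n) + 2 * K ^ 3 / n ^ 2)) * ∫ x in (0 : ℝ)..K, exp (-x ^ 2 / (2 * n))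
      ≤ sawZ n 1 := by
  rcases Nat.eq_zero_or_pos K with rfl | hK0
  · rw [Nat.cast_zero, intervalIntegral.integral_same, mul_zero]
    exact sum_nonneg fun k _ => sawWeight_nonneg n zero_le_one k
  have hn' : (0 : ℝ) < n := by exact_mod_cast (by omega : 0 < n)
  have hint := ((antitoneOn_exp_neg_sq_div (by positivity : (0 : ℝ) ≤ 2 * n)).mono
    fun x hx => hx.1).integral_le_sum (x₀ := 0) (a := K)
  rw [zero_add] at hint
  have hterm : ∀ k ∈ range K, exp (-(K / (2 * n) + 2 * K ^ 3 / n ^ 2)) *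
      exp (-(0 + (k : ℝ)) ^ 2 / (2 * n)) ≤ sawWeight n 1 k := fun k hk => by
    have hkK : (k : ℝ) ≤ K := by exact_mod_cast (mem_range.1 hk).le
    refine le_trans ?_ (exp_neg_le_sawWeight_one (by linarith [mem_range.1 hk] : 2 * k ≤ n))
    rw [← exp_add, exp_le_exp, zero_add]
    have : (k : ℝ) / (2 * n) + 2 * k ^ 3 / n ^ 2 ≤ K / (2 * n) + 2 * K ^ 3 / n ^ 2 := by
      gcongr
    linarith [show -((k : ℝ) * (k + 1)) / (2 * n) = -k ^ 2 / (2 * n) - k / (2 * n) by ring]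
  calc _ ≤ exp (-(K / (2 * n) + 2 * K ^ 3 / n ^ 2)) *
        ∑ k ∈ range K, exp (-(0 + (k : ℝ)) ^ 2 / (2 * n)) := by gcongr
    _ ≤ ∑ k ∈ range K, sawWeight n 1 k := by rw [mul_sum]; exact sum_le_sum hterm
    _ ≤ sawZ n 1 := sum_le_sum_of_subset_of_nonneg (range_subset_range.2 (by omega))
        fun k _ _ => sawWeight_nonneg n zero_le_one k

lemma sqrt_mul_exp_neg_mul_integral_le_sawZ_one {n : ℕ} {t : ℝ} (ht : 0 ≤ t)
    (hn : 2 * (t + 1) ≤ √n) :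
    √n * exp (-(3 * (t + 1) ^ 3 / √n)) * ∫ u in (0 : ℝ)..t, exp (-u ^ 2 / 2) ≤ sawZ n 1 := by
  set r := √(n : ℝ)
  have hr0 : 0 < r := by linarith
  have hrn : r ^ 2 = n := sq_sqrt (Nat.cast_nonneg n)
  -- Truncating at `K = ⌈t √n⌉` keeps the cubic error `K³/n²` of order `1/√n`.
  set K := ⌈t * r⌉₊
  have hK1 : t * r ≤ K := Nat.le_ceil _
  have hK2 : (K : ℝ) ≤ (t + 1) * r := by
    have := Nat.ceil_lt_add_one (by positivity : 0 ≤ t * r)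
    nlinarith
  have hKn : 2 * K ≤ n := by
    have : (2 * K : ℝ) ≤ n := by nlinarith
    exact_mod_cast this
  have hε : (K : ℝ) / (2 * n) + 2 * K ^ 3 / n ^ 2 ≤ 3 * (t + 1) ^ 3 / r := by
    rw [← hrn]
    calc (K : ℝ) / (2 * r ^ 2) + 2 * K ^ 3 / (r ^ 2) ^ 2
        ≤ (t + 1) * r / (2 * r ^ 2) + 2 * ((t + 1) * r) ^ 3 / (r ^ 2) ^ 2 := by gcongr
      _ = ((t + 1) / 2 + 2 * (t + 1) ^ 3) / r := by field_simp
      _ ≤ 3 * (t + 1) ^ 3 / r := by gcongr; nlinarith [mul_nonneg (mul_nonneg ht ht) ht]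
  have hF : ∫ u in (0 : ℝ)..t, exp (-u ^ 2 / 2) ≤ ∫ u in (0 : ℝ)..K / r, exp (-u ^ 2 / 2) :=
    intervalIntegral.integral_mono_interval le_rfl ht ((le_div_iff₀ hr0).2 hK1)
      (ae_of_all _ fun _ => (exp_pos _).le) integrable_exp_neg_sq_div_two.intervalIntegrable
  have hZ := exp_neg_mul_integral_le_sawZ_one hKn
  rw [integral_exp_neg_sq_div_two_mul (by rw [← hrn]; positivity)] at hZ
  calc _ = exp (-(3 * (t + 1) ^ 3 / r)) * (r * ∫ u in (0 : ℝ)..t, exp (-u ^ 2 / 2)) := by ring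
    _ ≤ exp (-(K / (2 * n) + 2 * K ^ 3 / n ^ 2)) *
        (r * ∫ u in (0 : ℝ)..K / r, exp (-u ^ 2 / 2)) := by
      gcongr
      exact mul_nonneg hr0.le
        (intervalIntegral.integral_nonneg ht fun u _ => (exp_pos (-u ^ 2 / 2)).le)
    _ ≤ sawZ n 1 := hZ

lemma tendsto_sawZ_one_div_sqrt :
    Tendsto (fun n : ℕ => sawZ n 1 / √n) atTop (𝓝 √(π / 2)) := by
  rw [← integral_Ioi_exp_neg_sq_div_two]
  set I := ∫ u in Set.Ioi 0, exp (-u ^ 2 / 2)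
  have hsqrt : Tendsto (fun n : ℕ => √(n : ℝ)) atTop atTop :=
    tendsto_sqrt_atTop.comp tendsto_natCast_atTop_atTop
  have hinv : Tendsto (fun n : ℕ => (√(n : ℝ))⁻¹) atTop (𝓝 0) := hsqrt.inv_tendsto_atTop
  refine tendsto_order.2 ⟨fun a ha => ?_, fun b hb => ?_⟩
  · obtain ⟨t, hat, ht⟩ := ((intervalIntegral_tendsto_integral_Ioi 0
      integrable_exp_neg_sq_div_two.integrableOn tendsto_id).eventually (lt_mem_nhds ha)).and
      (eventually_ge_atTop 0) |>.exists
    set F := ∫ u in (0 : ℝ)..t, exp (-u ^ 2 / 2)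
    have hlim : Tendsto (fun n : ℕ => exp (-(3 * (t + 1) ^ 3 / √n)) * F) atTop (𝓝 F) := by
      have h := ((hinv.const_mul (3 * (t + 1) ^ 3)).neg.rexp).mul_const F
      rwa [mul_zero, neg_zero, exp_zero, one_mul] at h
    filter_upwards [hlim.eventually (lt_mem_nhds hat), hsqrt.eventually_ge_atTop (2 * (t + 1))]
      with n hlt hn
    have hZ := sqrt_mul_exp_neg_mul_integral_le_sawZ_one ht hn
    rw [lt_div_iff₀ (by linarith)]
    nlinarith
  · have hlim : Tendsto (fun n : ℕ => I + (√(n : ℝ))⁻¹) atTop (𝓝 I) := by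
      simpa using hinv.const_add I
    filter_upwards [hlim.eventually (gt_mem_nhds hb), eventually_ne_atTop 0] with n hlt hn
    have hZ := sawZ_one_le hn
    have hr : (0 : ℝ) < √n := sqrt_pos.2 (by positivity)
    refine lt_of_le_of_lt ?_ hlt
    rw [div_le_iff₀ hr, add_mul, inv_mul_cancel₀ hr.ne']
    linarith

theorem var_critical :
    (fun n : ℕ => sawVar n 1) ~[atTop] (fun n : ℕ => (1 - 2 / Real.pi) * n) := by
  have hπ : 1 - 2 / π ≠ 0 :=
    (sub_pos.2 ((div_lt_one pi_pos).2 (by linarith [pi_gt_three]))).ne'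
  have hlim : Tendsto (fun n : ℕ => 1 - ((sawZ n 1 / √n)⁻¹) ^ 2) atTop (𝓝 (1 - 2 / π)) := by
    have := ((tendsto_sawZ_one_div_sqrt.inv₀ (by positivity)).pow 2).const_sub 1
    rwa [inv_pow, sq_sqrt (by positivity), inv_div] at this
  refine (((isEquivalent_const_iff_tendsto hπ).2 hlim).mul IsEquivalent.refl).congr_left ?_
  filter_upwards [eventually_ne_atTop 0] with n hn
  rw [Pi.mul_apply, sawVar_one hn, inv_div, div_pow, sq_sqrt (Nat.cast_nonneg _)]
  have hZ : sawZ n 1 ≠ 0 := (zero_lt_one.trans_le (one_le_sawZ hn zero_le_one)).ne'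
  field_simp
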